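/- Let μ ∈ (0, 1/4], let n be a positive integer, let p be a prime, and let v ∈ (ℤ/pℤ)^n. Set d = (2/μ)·log(1/ρ_μ(v)) and let k be a positive integer with k·d ≤ n. Then there exist T ⊆ S ⊆ [n] with |T| ≤ d and |S| ≤ k·d such that v_i ∈ N_μ(v_T) for all i ∉ S, and ρ_μ(v_S) ≤ ρ_μ(v_T^k). -/

import Mathlib

/-- `probX μ v x` is the probability that the random walk `X_μ(v) = ε₁v₁ + ⋯ + εₙvₙ`
(valued in `ℤ/pℤ`) equals `x`, where `ε₁,…,εₙ` are i.i.d. with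
`P(εᵢ = 1) = P(εᵢ = -1) = μ/2` and `P(εᵢ = 0) = 1 - μ`. -/
noncomputable def probX {p : ℕ} [NeZero p] {ι : Type} [Fintype ι] [DecidableEq ι]
    (μ : ℝ) (v : ι → ZMod p) (x : ZMod p) : ℝ :=
  ∑ ε : ι → ({-1, 0, 1} : Finset ℤ),
    (∏ i, if (ε i : ℤ) = 0 then 1 - μ else μ / 2) *
      (if (∑ i, ((ε i : ℤ) : ZMod p) * v i) = x then 1 else 0)

/-- `rho μ v = max_x P(X_μ(v) = x)`, the largest atom of the random walk `X_μ(v)`. -/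
noncomputable def rho {p : ℕ} [NeZero p] {ι : Type} [Fintype ι] [DecidableEq ι]
    (μ : ℝ) (v : ι → ZMod p) : ℝ :=
  ⨆ x : ZMod p, probX μ v x
open scoped Classical in
/-- The neighbourhood `N_μ(w) = {x : P(X_μ(w) = x) > (1/2) P(X_μ(w) = 0)}`. -/
noncomputable def nbhd {p : ℕ} [NeZero p] {ι : Type} [Fintype ι] [DecidableEq ι]
    (μ : ℝ) (w : ι → ZMod p) : Finset (ZMod p) :=
  Finset.univ.filter fun x => probX μ w x > probX μ w 0 / 2

/-!
Writing `P(X_μ(w) = x) = p⁻¹ ∑_ξ ∏_i g(ξ wᵢ) Re ψ(ξ x)` with `g(a) = 1 - μ + μ Re ψ(a) ∈ [0, 1]`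
(as `μ ≤ 1/2`), the atom at `0` is the largest one, `A ↦ P(X(v_A) = 0)` is antitone, and
`P(X(v_{A ∪ {i}}) = 0) = (1 - μ) P(X(v_A) = 0) + μ P(X(v_A) = vᵢ)`. Hence a set `T` of maximal
size with `P(X(v_T) = 0) ≤ (1 - μ/2)^|T|` avoiding a given set has every other `vᵢ` in
`N_μ(v_T)`, and `|T| ≤ d` by antitonicity. Doing this `k` times on disjoint sets gives
`S = T₁ ∪ ⋯ ∪ T_k`; on the Fourier side `∏_{i ∈ S} = ∏_j ∏_{i ∈ T_j}`, which AM-GM bounds by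
the mean of the `k`-th powers, i.e. of the `P(X(v_{T_j}^k) = 0)`, so one of the `T_j` is a `T`.
-/

open Finset Function

lemma AddChar.map_sum_eq_prod {A M ι : Type*} [AddCommMonoid A] [CommMonoid M]
    (ψ : AddChar A M) (s : Finset ι) (f : ι → A) : ψ (∑ i ∈ s, f i) = ∏ i ∈ s, ψ (f i) := by
  classical
  induction s using Finset.induction_on with
  | empty => simp
  | insert i s hi ih => rw [sum_insert hi, prod_insert hi, AddChar.map_add_eq_mul, ih]

lemma Finset.prod_le_inv_card_mul_sum_pow {α : Type*} {s : Finset α} (hs : s.Nonempty) {f : α → ℝ}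
    (hf : ∀ j ∈ s, 0 ≤ f j) : ∏ j ∈ s, f j ≤ (#s : ℝ)⁻¹ * ∑ j ∈ s, f j ^ #s := by
  have hn : #s ≠ 0 := hs.card_pos.ne'
  calc ∏ j ∈ s, f j = ∏ j ∈ s, (f j ^ #s) ^ ((#s : ℝ)⁻¹) :=
        prod_congr rfl fun j hj => (Real.pow_rpow_inv_natCast (hf j hj) hn).symm
    _ ≤ ∑ j ∈ s, (#s : ℝ)⁻¹ * f j ^ #s :=
        Real.geom_mean_le_arith_mean_weighted s _ _ (fun _ _ => by positivity)
          (by simp [hn]) fun j hj => pow_nonneg (hf j hj) _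
    _ = (#s : ℝ)⁻¹ * ∑ j ∈ s, f j ^ #s := (mul_sum _ _ _).symm

namespace LittlewoodOfford

variable {p : ℕ} [NeZero p] {ι : Type} [Fintype ι] [DecidableEq ι] {μ : ℝ}

lemma ite_eq_mul_sum_stdAddChar (a x : ZMod p) :
    (if a = x then 1 else 0 : ℂ) = (p : ℂ)⁻¹ * ∑ ξ : ZMod p, ZMod.stdAddChar (ξ * (a - x)) := by
  have hp : (p : ℂ) ≠ 0 := Nat.cast_ne_zero.mpr (NeZero.ne p)
  rw [AddChar.sum_mulShift _ (ZMod.isPrimitive_stdAddChar p), ZMod.card]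
  by_cases h : a = x <;> simp [h, sub_eq_zero, hp]

/-- The characteristic function `E ψ(ε a)` of a single step `ε a`. -/
noncomputable def stepChar (μ : ℝ) (a : ZMod p) : ℝ :=
  1 - μ + μ * (ZMod.stdAddChar a).re

lemma abs_re_stdAddChar_le_one (a : ZMod p) : |(ZMod.stdAddChar a).re| ≤ 1 :=
  (Complex.abs_re_le_norm _).trans (AddChar.norm_apply _ _).le

lemma stepChar_nonneg (hμ0 : 0 ≤ μ) (hμ : μ ≤ 1 / 2) (a : ZMod p) : 0 ≤ stepChar μ a := by
  have := (abs_le.mp (abs_re_stdAddChar_le_one a)).1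
  unfold stepChar
  nlinarith

lemma stepChar_le_one (hμ0 : 0 ≤ μ) (a : ZMod p) : stepChar μ a ≤ 1 := by
  have := (abs_le.mp (abs_re_stdAddChar_le_one a)).2
  unfold stepChar
  nlinarith

@[simp]
lemma stepChar_zero : stepChar μ (0 : ZMod p) = 1 := by
  simp [stepChar]

lemma ofReal_stepChar (μ : ℝ) (a : ZMod p) :
    (stepChar μ a : ℂ) = ∑ e : ({-1, 0, 1} : Finset ℤ),
      (if (e : ℤ) = 0 then 1 - (μ : ℂ) else μ / 2) * ZMod.stdAddChar (((e : ℤ) : ZMod p) * a) := by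
  rw [sum_coe_sort _ fun e : ℤ => (if e = 0 then 1 - (μ : ℂ) else μ / 2) *
    ZMod.stdAddChar ((e : ZMod p) * a), sum_insert (by decide), sum_insert (by decide),
    sum_singleton]
  have hre := Complex.add_conj (ZMod.stdAddChar a)
  rw [← AddChar.map_neg_eq_conj] at hre
  simp only [stepChar, if_neg (show (-1 : ℤ) ≠ 0 by decide), if_neg one_ne_zero,
    Int.cast_neg, Int.cast_one, Int.cast_zero, neg_one_mul, one_mul, zero_mul,
    AddChar.map_zero_eq_one]
  push_cast at hre ⊢
  linear_combination (-μ / 2 : ℂ) * hre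

lemma ofReal_probX_eq (μ : ℝ) (w : ι → ZMod p) (x : ZMod p) :
    (probX μ w x : ℂ) = (p : ℂ)⁻¹ * ∑ ξ : ZMod p,
      (∏ i, (stepChar μ (ξ * w i) : ℂ)) * ZMod.stdAddChar (-(ξ * x)) := by
  set W : ℤ → ℂ := fun e => if e = 0 then 1 - (μ : ℂ) else μ / 2
  have hchar : ∀ (ε : ι → ({-1, 0, 1} : Finset ℤ)) (ξ : ZMod p),
      ZMod.stdAddChar (ξ * (∑ i, ((ε i : ℤ) : ZMod p) * w i - x)) =
        ZMod.stdAddChar (-(ξ * x)) * ∏ i, ZMod.stdAddChar (((ε i : ℤ) : ZMod p) * (ξ * w i)) := by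
    intro ε ξ
    rw [mul_sub, sub_eq_neg_add, AddChar.map_add_eq_mul, mul_sum, AddChar.map_sum_eq_prod]
    simp only [mul_left_comm]
  calc (probX μ w x : ℂ)
      = ∑ ε : ι → ({-1, 0, 1} : Finset ℤ), (∏ i, W (ε i)) *
          ((p : ℂ)⁻¹ * ∑ ξ : ZMod p,
            ZMod.stdAddChar (ξ * (∑ i, ((ε i : ℤ) : ZMod p) * w i - x))) := by
        simp only [probX, Complex.ofReal_sum, Complex.ofReal_mul, Complex.ofReal_prod,
          apply_ite (Complex.ofReal : ℝ → ℂ), ← ite_eq_mul_sum_stdAddChar]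
        push_cast
        rfl
    _ = (p : ℂ)⁻¹ * ∑ ξ : ZMod p, ZMod.stdAddChar (-(ξ * x)) * ∑ ε : ι → ({-1, 0, 1} : Finset ℤ),
          ∏ i, W (ε i) * ZMod.stdAddChar (((ε i : ℤ) : ZMod p) * (ξ * w i)) := by
        simp only [hchar, mul_sum, prod_mul_distrib]
        rw [sum_comm]
        refine sum_congr rfl fun ξ _ => sum_congr rfl fun ε _ => ?_
        ring
    _ = _ := by
        simp only [ofReal_stepChar, W, Fintype.prod_sum, mul_sum, sum_mul]
        refine sum_congr rfl fun ξ _ => sum_congr rfl fun ε _ => ?_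
        ring

lemma probX_eq_sum_stepChar (μ : ℝ) (w : ι → ZMod p) (x : ZMod p) :
    probX μ w x = (p : ℝ)⁻¹ * ∑ ξ : ZMod p,
      (∏ i, stepChar μ (ξ * w i)) * (ZMod.stdAddChar (ξ * x)).re := by
  rw [← Complex.ofReal_re (probX μ w x), ofReal_probX_eq, ← Complex.ofReal_natCast,
    ← Complex.ofReal_inv, Complex.re_ofReal_mul, Complex.re_sum]
  congr 1
  refine sum_congr rfl fun ξ _ => ?_
  rw [← Complex.ofReal_prod, Complex.re_ofReal_mul, AddChar.map_neg_eq_conj, Complex.conj_re]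

lemma probX_zero_eq_sum_stepChar (μ : ℝ) (w : ι → ZMod p) :
    probX μ w 0 = (p : ℝ)⁻¹ * ∑ ξ : ZMod p, ∏ i, stepChar μ (ξ * w i) := by
  simp [probX_eq_sum_stepChar]

section NonnegStepChar

variable (hμ0 : 0 ≤ μ) (hμ : μ ≤ 1 / 2)
include hμ0 hμ

lemma probX_le_probX_zero (w : ι → ZMod p) (x : ZMod p) : probX μ w x ≤ probX μ w 0 := by
  rw [probX_eq_sum_stepChar, probX_zero_eq_sum_stepChar]
  gcongr with ξ
  exact mul_le_of_le_one_right (prod_nonneg fun i _ => stepChar_nonneg hμ0 hμ _)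
    (abs_le.mp (abs_re_stdAddChar_le_one _)).2

lemma rho_eq_probX_zero (w : ι → ZMod p) : rho μ w = probX μ w 0 :=
  le_antisymm (ciSup_le (probX_le_probX_zero hμ0 hμ w))
    (le_ciSup (Set.finite_range _).bddAbove 0)

end NonnegStepChar

section Restrict

variable {κ : Type} [DecidableEq κ]

noncomputable def zeroProb (μ : ℝ) (v : κ → ZMod p) (A : Finset κ) : ℝ :=
  probX μ (fun j : A => v j) 0

lemma probX_restrict_eq (v : κ → ZMod p) (A : Finset κ) (x : ZMod p) :
    probX μ (fun j : A => v j) x = (p : ℝ)⁻¹ * ∑ ξ : ZMod p,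
      (∏ i ∈ A, stepChar μ (ξ * v i)) * (ZMod.stdAddChar (ξ * x)).re := by
  rw [probX_eq_sum_stepChar]
  congr 1
  refine sum_congr rfl fun ξ _ => ?_
  rw [prod_coe_sort A fun i => stepChar μ (ξ * v i)]

lemma zeroProb_eq (v : κ → ZMod p) (A : Finset κ) :
    zeroProb μ v A = (p : ℝ)⁻¹ * ∑ ξ : ZMod p, ∏ i ∈ A, stepChar μ (ξ * v i) := by
  simp [zeroProb, probX_restrict_eq]

lemma zeroProb_univ [Fintype κ] (v : κ → ZMod p) : zeroProb μ v univ = probX μ v 0 := by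
  rw [zeroProb_eq, probX_zero_eq_sum_stepChar]

lemma zeroProb_empty (v : κ → ZMod p) : zeroProb μ v ∅ = 1 := by
  have hp : (p : ℝ) ≠ 0 := Nat.cast_ne_zero.mpr (NeZero.ne p)
  simp [zeroProb_eq, ZMod.card, hp]

lemma zeroProb_insert (v : κ → ZMod p) {A : Finset κ} {i : κ} (hi : i ∉ A) :
    zeroProb μ v (insert i A) =
      (1 - μ) * zeroProb μ v A + μ * probX μ (fun j : A => v j) (v i) := by
  simp only [zeroProb_eq, probX_restrict_eq, prod_insert hi, stepChar, mul_sum, ← sum_add_distrib]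
  refine sum_congr rfl fun ξ _ => ?_
  ring

lemma probX_repeat_zero_eq (v : κ → ZMod p) (A : Finset κ) (k : ℕ) :
    probX μ (fun x : A × Fin k => v x.1) 0 =
      (p : ℝ)⁻¹ * ∑ ξ : ZMod p, (∏ i ∈ A, stepChar μ (ξ * v i)) ^ k := by
  rw [probX_zero_eq_sum_stepChar]
  congr 1
  refine sum_congr rfl fun ξ _ => ?_
  rw [Fintype.prod_prod_type, ← prod_coe_sort A fun i => stepChar μ (ξ * v i), ← prod_pow]
  simp

lemma zeroProb_pos (hμ0 : 0 ≤ μ) (hμ : μ ≤ 1 / 2) (v : κ → ZMod p) (A : Finset κ) :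
    0 < zeroProb μ v A := by
  rw [zeroProb_eq]
  have hp : (0 : ℝ) < p := by exact_mod_cast NeZero.pos p
  refine mul_pos (inv_pos.mpr hp) ?_
  calc (0 : ℝ) < ∏ i ∈ A, stepChar μ ((0 : ZMod p) * v i) := by
        simp only [zero_mul, stepChar_zero, prod_const_one, zero_lt_one]
    _ ≤ _ := single_le_sum (f := fun ξ : ZMod p => ∏ i ∈ A, stepChar μ (ξ * v i))
        (fun ξ _ => prod_nonneg fun i _ => stepChar_nonneg hμ0 hμ _) (mem_univ 0)

lemma zeroProb_antitone (hμ0 : 0 ≤ μ) (hμ : μ ≤ 1 / 2) (v : κ → ZMod p) :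
    Antitone (zeroProb μ v) := by
  intro A B hAB
  simp only [zeroProb_eq]
  refine mul_le_mul_of_nonneg_left (sum_le_sum fun ξ _ => ?_) (by positivity)
  rw [← prod_sdiff hAB]
  exact mul_le_of_le_one_left (prod_nonneg fun i _ => stepChar_nonneg hμ0 hμ _)
    (prod_le_one (fun i _ => stepChar_nonneg hμ0 hμ _) fun i _ => stepChar_le_one hμ0 _)

lemma exists_greedy [Fintype κ] (hμ0 : 0 ≤ μ) (hμ : μ ≤ 2) (v : κ → ZMod p) (B : Finset κ) :
    ∃ T : Finset κ, Disjoint T B ∧ zeroProb μ v T ≤ (1 - μ / 2) ^ #T ∧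
      ∀ i ∉ B, i ∉ T → v i ∈ nbhd μ (fun j : T => v j) := by
  classical
  set good := univ.filter fun T : Finset κ => Disjoint T B ∧ zeroProb μ v T ≤ (1 - μ / 2) ^ #T
  obtain ⟨T, hT, hmax⟩ := exists_max_image good card ⟨∅, by simp [good, zeroProb_empty]⟩
  obtain ⟨-, hTB, hTsmall⟩ := mem_filter.mp hT
  refine ⟨T, hTB, hTsmall, fun i hiB hiT => ?_⟩
  by_contra hi
  have hvi : probX μ (fun j : T => v j) (v i) ≤ zeroProb μ v T / 2 := by
    simpa [nbhd, zeroProb] using hi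
  have hinsert : insert i T ∈ good := by
    refine mem_filter.mpr ⟨mem_univ _, disjoint_insert_left.mpr ⟨hiB, hTB⟩, ?_⟩
    calc zeroProb μ v (insert i T)
        = (1 - μ) * zeroProb μ v T + μ * probX μ (fun j : T => v j) (v i) := zeroProb_insert v hiT
      _ ≤ (1 - μ / 2) * zeroProb μ v T := by nlinarith
      _ ≤ (1 - μ / 2) * (1 - μ / 2) ^ #T := by gcongr; linarith
      _ = (1 - μ / 2) ^ #(insert i T) := by rw [card_insert_of_notMem hiT, pow_succ']
  have := hmax _ hinsert
  rw [card_insert_of_notMem hiT] at this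
  omega

lemma pairwise_disjoint_fin_cons {k : ℕ} {T : Finset κ} {Ts : Fin k → Finset κ}
    (hT : Disjoint T (univ.biUnion Ts)) (hTs : Pairwise (Disjoint on Ts)) :
    Pairwise (Disjoint on (Fin.cons T Ts : Fin (k + 1) → Finset κ)) := by
  have hT' : ∀ j, Disjoint T (Ts j) := fun j =>
    hT.mono_right (subset_biUnion_of_mem Ts (mem_univ j))
  intro a b hab
  cases a using Fin.cases with
  | zero => cases b using Fin.cases with
    | zero => exact absurd rfl hab
    | succ b => simpa [onFun] using hT' b
  | succ a => cases b using Fin.cases with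
    | zero => simpa [onFun] using (hT' a).symm
    | succ b => simpa [onFun] using hTs fun h => hab (congrArg Fin.succ h)

lemma exists_greedy_family [Fintype κ] (hμ0 : 0 ≤ μ) (hμ : μ ≤ 2) (v : κ → ZMod p) :
    ∀ k : ℕ, ∃ Ts : Fin k → Finset κ, Pairwise (Disjoint on Ts) ∧
      (∀ j, zeroProb μ v (Ts j) ≤ (1 - μ / 2) ^ #(Ts j)) ∧
      ∀ i ∉ univ.biUnion Ts, ∀ j, v i ∈ nbhd μ (fun l : Ts j => v l)
  | 0 => ⟨Fin.elim0, fun j => j.elim0, fun j => j.elim0, fun _ _ j => j.elim0⟩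
  | k + 1 => by
    obtain ⟨Ts, hdisj, hsmall, hnbhd⟩ := exists_greedy_family hμ0 hμ v k
    obtain ⟨T, hT, hTsmall, hTnbhd⟩ := exists_greedy hμ0 hμ v (univ.biUnion Ts)
    refine ⟨Fin.cons T Ts, pairwise_disjoint_fin_cons hT hdisj, Fin.cases hTsmall hsmall,
      fun i hi => ?_⟩
    simp only [mem_biUnion, mem_univ, true_and, Fin.exists_fin_succ, Fin.cons_zero,
      Fin.cons_succ, not_or] at hi
    exact Fin.cases (hTnbhd i (by simpa using hi.2) hi.1) (hnbhd i (by simpa using hi.2))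

lemma card_le_of_zeroProb_le [Fintype κ] (hμ0 : 0 < μ) (hμ : μ ≤ 1 / 2) (v : κ → ZMod p)
    {T : Finset κ} (hT : zeroProb μ v T ≤ (1 - μ / 2) ^ #T) :
    (#T : ℝ) ≤ 2 / μ * Real.log (probX μ v 0)⁻¹ := by
  have hlog : Real.log (probX μ v 0) ≤ #T * Real.log (1 - μ / 2) := by
    rw [← zeroProb_univ, ← Real.log_pow]
    exact Real.log_le_log (zeroProb_pos hμ0.le hμ v univ)
      ((zeroProb_antitone hμ0.le hμ v (subset_univ T)).trans hT)
  have hstep : Real.log (1 - μ / 2) ≤ -(μ / 2) := by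
    linarith [Real.log_le_sub_one_of_pos (by linarith : 0 < 1 - μ / 2)]
  rw [Real.log_inv, div_mul_eq_mul_div, le_div_iff₀ hμ0]
  nlinarith [(Nat.cast_nonneg #T : (0 : ℝ) ≤ #T)]

lemma exists_zeroProb_biUnion_le (hμ0 : 0 ≤ μ) (hμ : μ ≤ 1 / 2)
    (v : κ → ZMod p) {k : ℕ} (hk : 0 < k) {Ts : Fin k → Finset κ}
    (hTs : Pairwise (Disjoint on Ts)) :
    ∃ j, zeroProb μ v (univ.biUnion Ts) ≤ probX μ (fun x : Ts j × Fin k => v x.1) 0 := by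
  set F : Fin k → ZMod p → ℝ := fun j ξ => ∏ i ∈ Ts j, stepChar μ (ξ * v i)
  have hF : ∀ j ξ, 0 ≤ F j ξ := fun j ξ => prod_nonneg fun i _ => stepChar_nonneg hμ0 hμ _
  have hmean : zeroProb μ v (univ.biUnion Ts) ≤
      (k : ℝ)⁻¹ * ∑ j, probX μ (fun x : Ts j × Fin k => v x.1) 0 := by
    calc zeroProb μ v (univ.biUnion Ts) = (p : ℝ)⁻¹ * ∑ ξ : ZMod p, ∏ j, F j ξ := by
          simp only [zeroProb_eq, prod_biUnion (hTs.set_pairwise _), F]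
      _ ≤ (p : ℝ)⁻¹ * ∑ ξ : ZMod p, (k : ℝ)⁻¹ * ∑ j, F j ξ ^ k := by
          gcongr with ξ
          simpa using prod_le_inv_card_mul_sum_pow (univ_nonempty_iff.mpr ⟨⟨0, hk⟩⟩)
            fun j _ => hF j ξ
      _ = (k : ℝ)⁻¹ * ∑ j, probX μ (fun x : Ts j × Fin k => v x.1) 0 := by
          simp only [probX_repeat_zero_eq, F, mul_sum]
          rw [sum_comm]
          refine sum_congr rfl fun j _ => sum_congr rfl fun ξ _ => ?_
          ring
  obtain ⟨j, -, hj⟩ := exists_le_of_sum_le (univ_nonempty_iff.mpr ⟨⟨0, hk⟩⟩)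
    (f := fun _ => zeroProb μ v (univ.biUnion Ts))
    (g := fun j => probX μ (fun x : Ts j × Fin k => v x.1) 0) (by
      rw [sum_const, card_univ, Fintype.card_fin, nsmul_eq_mul]
      rw [inv_mul_eq_div, le_div_iff₀ (by exact_mod_cast hk)] at hmean
      linarith)
  exact ⟨j, hj⟩

end Restrict

end LittlewoodOfford

open LittlewoodOfford

theorem iterated_greedy_inverse_littlewood_offord
    (μ : ℝ) (hμ : μ ∈ Set.Ioc (0 : ℝ) (1 / 4)) (n p : ℕ)
    [Fact p.Prime] (v : Fin n → ZMod p) (d : ℝ)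
    (hd : d = 2 / μ * Real.log (rho μ v)⁻¹)
    (k : ℕ) (hk : 0 < k) :
    ∃ T S : Finset (Fin n), T ⊆ S ∧ (T.card : ℝ) ≤ d ∧ (S.card : ℝ) ≤ k * d ∧
      (∀ i ∉ S, v i ∈ nbhd μ (fun j : T => v j.1)) ∧
      rho μ (fun j : S => v j.1) ≤ rho μ (fun x : T × Fin k => v x.1.1) := by
  obtain ⟨hμ0, hμ⟩ := hμ
  have hμ' : μ ≤ 1 / 2 := by linarith
  obtain ⟨Ts, hdisj, hsmall, hnbhd⟩ := exists_greedy_family hμ0.le (by linarith) v k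
  obtain ⟨j, hj⟩ := exists_zeroProb_biUnion_le hμ0.le hμ' v hk hdisj
  have hcard : ∀ j, (#(Ts j) : ℝ) ≤ d := fun j => by
    rw [hd, rho_eq_probX_zero hμ0.le hμ']
    exact card_le_of_zeroProb_le hμ0 hμ' v (hsmall j)
  refine ⟨Ts j, univ.biUnion Ts, subset_biUnion_of_mem Ts (mem_univ j), hcard j, ?_,
    fun i hi => hnbhd i hi j, ?_⟩
  · calc (#(univ.biUnion Ts) : ℝ) ≤ ∑ j, (#(Ts j) : ℝ) := by exact_mod_cast card_biUnion_le
      _ ≤ ∑ _j : Fin k, d := sum_le_sum fun j _ => hcard j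
      _ = k * d := by simp
  · rw [rho_eq_probX_zero hμ0.le hμ', rho_eq_probX_zero hμ0.le hμ']
    exact hj
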